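/- Let G be a finite Blaschke product such that the iterates of G tend uniformly to the unit circle on compact subsets of 𝔻: for every compact C ⊆ 𝔻, min_{z ∈ C} |Gⁿ(z)| → 1 as n → ∞. Let K, L ⊆ 𝔻 be compact. Then for all sufficiently large n: the set G⁻ⁿ(K) := { z ∈ 𝔻 : Gⁿ(z) ∈ K } is disjoint from L, and L is contained in the connected component of closure(𝔻) \ G⁻ⁿ(K) that contains the unit circle. -/

import Mathlib

/-!
Choose `s < 1` with `K ⊆ B(0, s)`; by the escape hypothesis `|Gⁿ| > s` on `L` for large `n`, so
`Gⁿ` misses `K` on `L`. Since `Gⁿ` maps the unit circle to itself, `S = G⁻ⁿ(K)` is a compact subset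
of `𝔻`, hence the annulus `ρ ≤ |z| ≤ 1` (for some `ρ < 1`) lies in the outer component of
`closure 𝔻 \ S`. A point of `𝔻 \ S` outside that component lies in a component `V` of `𝔻 \ S`
with `closure V ⊆ 𝔻` and `∂V ⊆ S`, so the maximum principle gives `|Gⁿ| ≤ s` on `V`; points of
`L` are therefore in the outer component.
-/

/-- `G` agrees on the closed unit disk with a finite Blaschke product
`λ · ∏ᵢ (z - aᵢ)/(1 - conj(aᵢ) z)` with `d ≥ 1`, `|λ| = 1`, `|aᵢ| < 1`. -/
def IsFiniteBlaschke (G : ℂ → ℂ) : Prop :=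
  ∃ (d : ℕ) (lam : ℂ) (a : Fin d → ℂ),
    1 ≤ d ∧ ‖lam‖ = 1 ∧ (∀ i, ‖a i‖ < 1) ∧
    ∀ z ∈ Metric.closedBall (0:ℂ) 1,
      G z = lam * ∏ i, (z - a i) / (1 - (starRingEnd ℂ) (a i) * z)

open Metric Set ComplexConjugate

noncomputable def blaschkeFactor (a z : ℂ) : ℂ := (z - a) / (1 - conj a * z)

section BlaschkeFactor

variable {a z : ℂ}

lemma one_sub_conj_mul_ne_zero (ha : ‖a‖ < 1) (hz : ‖z‖ ≤ 1) : 1 - conj a * z ≠ 0 := by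
  have hlt : ‖conj a * z‖ < 1 := by
    rw [norm_mul, Complex.norm_conj]
    nlinarith [norm_nonneg a, norm_nonneg z]
  intro h
  rw [← sub_eq_zero.mp h, norm_one] at hlt
  exact lt_irrefl _ hlt

lemma sq_norm_one_sub_conj_mul_sub_sq_norm_sub (a z : ℂ) :
    ‖1 - conj a * z‖ ^ 2 - ‖z - a‖ ^ 2 = (1 - ‖a‖ ^ 2) * (1 - ‖z‖ ^ 2) := by
  simp only [← Complex.normSq_eq_norm_sq, Complex.normSq_apply, Complex.sub_re, Complex.sub_im,
    Complex.mul_re, Complex.mul_im, Complex.one_re, Complex.one_im, Complex.conj_re,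
    Complex.conj_im]
  ring

lemma norm_blaschkeFactor_lt_one (ha : ‖a‖ < 1) (hz : ‖z‖ < 1) : ‖blaschkeFactor a z‖ < 1 := by
  have hden := norm_pos_iff.mpr (one_sub_conj_mul_ne_zero ha hz.le)
  rw [blaschkeFactor, norm_div, div_lt_one hden]
  have hpos : 0 < (1 - ‖a‖ ^ 2) * (1 - ‖z‖ ^ 2) :=
    mul_pos (by nlinarith [norm_nonneg a]) (by nlinarith [norm_nonneg z])
  refine lt_of_pow_lt_pow_left₀ 2 hden.le ?_
  linarith [sq_norm_one_sub_conj_mul_sub_sq_norm_sub a z]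

lemma norm_blaschkeFactor_eq_one (ha : ‖a‖ < 1) (hz : ‖z‖ = 1) : ‖blaschkeFactor a z‖ = 1 := by
  have hden := norm_pos_iff.mpr (one_sub_conj_mul_ne_zero ha hz.le)
  rw [blaschkeFactor, norm_div, div_eq_one_iff_eq hden.ne',
    ← pow_left_inj₀ (norm_nonneg _) hden.le two_ne_zero]
  have key := sq_norm_one_sub_conj_mul_sub_sq_norm_sub a z
  rw [hz, one_pow, sub_self, mul_zero, sub_eq_zero] at key
  exact key.symm

lemma differentiableAt_blaschkeFactor (ha : ‖a‖ < 1) (hz : ‖z‖ ≤ 1) :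
    DifferentiableAt ℂ (blaschkeFactor a) z :=
  (differentiableAt_id.sub_const a).div (by fun_prop) (one_sub_conj_mul_ne_zero ha hz)

end BlaschkeFactor

noncomputable def blaschkeProduct {ι : Type*} [Fintype ι] (lam : ℂ) (a : ι → ℂ) (z : ℂ) : ℂ :=
  lam * ∏ i, blaschkeFactor (a i) z

section BlaschkeProduct

variable {ι : Type*} [Fintype ι] {lam z : ℂ} {a : ι → ℂ}

lemma norm_blaschkeProduct_lt_one [Nonempty ι] (hlam : ‖lam‖ = 1) (ha : ∀ i, ‖a i‖ < 1)
    (hz : ‖z‖ < 1) : ‖blaschkeProduct lam a z‖ < 1 := by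
  classical
  obtain ⟨i₀⟩ := ‹Nonempty ι›
  rw [blaschkeProduct, norm_mul, hlam, one_mul, norm_prod,
    ← Finset.mul_prod_erase _ _ (Finset.mem_univ i₀)]
  exact mul_lt_one_of_nonneg_of_lt_one_left (norm_nonneg _) (norm_blaschkeFactor_lt_one (ha i₀) hz)
    (Finset.prod_le_one (fun _ _ => norm_nonneg _)
      fun i _ => (norm_blaschkeFactor_lt_one (ha i) hz).le)

lemma norm_blaschkeProduct_eq_one (hlam : ‖lam‖ = 1) (ha : ∀ i, ‖a i‖ < 1) (hz : ‖z‖ = 1) :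
    ‖blaschkeProduct lam a z‖ = 1 := by
  rw [blaschkeProduct, norm_mul, hlam, one_mul, norm_prod]
  exact Finset.prod_eq_one fun i _ => norm_blaschkeFactor_eq_one (ha i) hz

lemma differentiableAt_blaschkeProduct (ha : ∀ i, ‖a i‖ < 1) (hz : ‖z‖ ≤ 1) :
    DifferentiableAt ℂ (blaschkeProduct lam a) z :=
  (DifferentiableAt.fun_finsetProd fun i _ => differentiableAt_blaschkeFactor (ha i) hz).const_mul
    lam

end BlaschkeProduct

namespace IsFiniteBlaschke

variable {G : ℂ → ℂ}

lemma exists_eqOn_blaschkeProduct (hG : IsFiniteBlaschke G) :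
    ∃ (d : ℕ) (lam : ℂ) (a : Fin d → ℂ), Nonempty (Fin d) ∧ ‖lam‖ = 1 ∧ (∀ i, ‖a i‖ < 1) ∧
      EqOn G (blaschkeProduct lam a) (closedBall 0 1) := by
  obtain ⟨d, lam, a, hd, hlam, ha, hGB⟩ := hG
  exact ⟨d, lam, a, ⟨⟨0, hd⟩⟩, hlam, ha, hGB⟩

lemma mapsTo_ball (hG : IsFiniteBlaschke G) : MapsTo G (ball 0 1) (ball 0 1) := by
  obtain ⟨d, lam, a, _, hlam, ha, hGB⟩ := hG.exists_eqOn_blaschkeProduct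
  intro z hz
  rw [hGB (ball_subset_closedBall hz)]
  rw [mem_ball_zero_iff] at hz ⊢
  exact norm_blaschkeProduct_lt_one hlam ha hz

lemma mapsTo_sphere (hG : IsFiniteBlaschke G) : MapsTo G (sphere 0 1) (sphere 0 1) := by
  obtain ⟨d, lam, a, -, hlam, ha, hGB⟩ := hG.exists_eqOn_blaschkeProduct
  intro z hz
  rw [hGB (sphere_subset_closedBall hz)]
  rw [mem_sphere_zero_iff_norm] at hz ⊢
  exact norm_blaschkeProduct_eq_one hlam ha hz

lemma mapsTo_closedBall (hG : IsFiniteBlaschke G) :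
    MapsTo G (closedBall 0 1) (closedBall 0 1) := by
  rw [← ball_union_sphere]
  exact hG.mapsTo_ball.union_union hG.mapsTo_sphere

lemma continuousOn (hG : IsFiniteBlaschke G) : ContinuousOn G (closedBall 0 1) := by
  obtain ⟨d, lam, a, -, -, ha, hGB⟩ := hG.exists_eqOn_blaschkeProduct
  refine ContinuousOn.congr (fun z hz => ?_) hGB
  exact (differentiableAt_blaschkeProduct ha (mem_closedBall_zero_iff.1 hz)).continuousAt
    |>.continuousWithinAt

lemma differentiableOn (hG : IsFiniteBlaschke G) : DifferentiableOn ℂ G (ball 0 1) := by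
  obtain ⟨d, lam, a, -, -, ha, hGB⟩ := hG.exists_eqOn_blaschkeProduct
  refine DifferentiableOn.congr (fun z hz => ?_) (hGB.mono ball_subset_closedBall)
  exact (differentiableAt_blaschkeProduct ha (mem_ball_zero_iff.1 hz).le).differentiableWithinAt

end IsFiniteBlaschke

lemma isPreconnected_setOf_le_norm_le {ρ : ℝ} (hρ : 0 ≤ ρ) (R : ℝ) :
    IsPreconnected {z : ℂ | ρ ≤ ‖z‖ ∧ ‖z‖ ≤ R} := by
  have polar : {z : ℂ | ρ ≤ ‖z‖ ∧ ‖z‖ ≤ R} =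
      (fun p : ℝ × ℝ => (p.1 : ℂ) * Complex.exp (p.2 * Complex.I)) '' (Icc ρ R ×ˢ univ) := by
    ext z
    constructor
    · rintro ⟨hρz, hzR⟩
      exact ⟨(‖z‖, z.arg), ⟨⟨hρz, hzR⟩, trivial⟩, Complex.norm_mul_exp_arg_mul_I z⟩
    · rintro ⟨⟨t, θ⟩, ⟨⟨hρt, htR⟩, -⟩, rfl⟩
      have : ‖(t : ℂ) * Complex.exp (θ * Complex.I)‖ = t := by
        rw [norm_mul, Complex.norm_exp_ofReal_mul_I, mul_one, Complex.norm_real, Real.norm_eq_abs,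
          abs_of_nonneg (hρ.trans hρt)]
      exact ⟨this.symm ▸ hρt, this.symm ▸ htR⟩
  rw [polar]
  exact (isPreconnected_Icc.prod isPreconnected_univ).image _ (by fun_prop)

lemma IsOpen.frontier_connectedComponentIn_subset {X : Type*} [TopologicalSpace X]
    [LocallyConnectedSpace X] {U : Set X} (hU : IsOpen U) (x : X) :
    frontier (connectedComponentIn U x) ⊆ Uᶜ := by
  intro p hp hpU
  obtain ⟨q, hqp, hqx⟩ := mem_closure_iff.mp (frontier_subset_closure hp) _
    hU.connectedComponentIn (mem_connectedComponentIn hpU)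
  have hpx : p ∈ connectedComponentIn U x := by
    rw [connectedComponentIn_eq hqx, ← connectedComponentIn_eq hqp]
    exact mem_connectedComponentIn hpU
  rw [hU.connectedComponentIn.frontier_eq] at hp
  exact hp.2 hpx

lemma connectedComponentIn_subset_ball_of_notMem {S : Set ℂ} {ρ : ℝ} {z : ℂ}
    (hρ₀ : 0 ≤ ρ) (hρ : ρ ≤ 1) (hSρ : S ⊆ ball 0 ρ)
    (hz : z ∉ connectedComponentIn (closedBall 0 1 \ S) 1) :
    connectedComponentIn (ball 0 1 \ S) z ⊆ ball 0 ρ := by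
  intro p hp
  by_contra hpρ
  have hp₁ : p ∈ ball (0 : ℂ) 1 \ S := connectedComponentIn_subset _ _ hp
  have annulus_sub : {w : ℂ | ρ ≤ ‖w‖ ∧ ‖w‖ ≤ 1} ⊆ connectedComponentIn (closedBall 0 1 \ S) 1 :=
    (isPreconnected_setOf_le_norm_le hρ₀ 1).subset_connectedComponentIn (by simpa using hρ)
      fun w hw => ⟨mem_closedBall_zero_iff.2 hw.2,
        fun hwS => hw.1.not_gt (mem_ball_zero_iff.1 (hSρ hwS))⟩
  have hpW := annulus_sub ⟨not_lt.1 (by simpa using hpρ), (mem_ball_zero_iff.1 hp₁.1).le⟩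
  apply hz
  rw [connectedComponentIn_eq hpW]
  have hzp : z ∈ connectedComponentIn (ball 0 1 \ S) p := by
    rw [← connectedComponentIn_eq hp]
    exact mem_connectedComponentIn (connectedComponentIn_nonempty_iff.1 ⟨p, hp⟩)
  exact connectedComponentIn_mono _ (sdiff_subset_sdiff_left ball_subset_closedBall) hzp

lemma norm_le_of_notMem_connectedComponentIn {f : ℂ → ℂ} {S : Set ℂ} {s : ℝ} {z : ℂ}
    (hf : DifferentiableOn ℂ f (ball 0 1)) (hS : IsClosed S) (hSD : S ⊆ ball 0 1)
    (hfS : ∀ w ∈ S, ‖f w‖ ≤ s) (hz : z ∈ ball 0 1 \ S)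
    (hzW : z ∉ connectedComponentIn (closedBall 0 1 \ S) 1) : ‖f z‖ ≤ s := by
  obtain ⟨ρ, hρ1, hSρ⟩ := exists_lt_subset_ball hS hSD
  set V := connectedComponentIn (ball 0 1 \ S) z
  have hVρ : V ⊆ ball 0 (max ρ 0) := connectedComponentIn_subset_ball_of_notMem (le_max_right ρ 0)
    (max_le hρ1.le zero_le_one) (hSρ.trans (ball_subset_ball (le_max_left ρ 0))) hzW
  have hVcl : closure V ⊆ ball 0 1 :=
    (closure_minimal (hVρ.trans ball_subset_closedBall) isClosed_closedBall).trans
      (closedBall_subset_ball (max_lt hρ1 zero_lt_one))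
  have hfrontier : frontier V ⊆ S := fun w hw => by
    by_contra hwS
    exact (isOpen_ball.sdiff hS).frontier_connectedComponentIn_subset z hw
      ⟨hVcl (frontier_subset_closure hw), hwS⟩
  refine Complex.norm_le_of_forall_mem_frontier_norm_le (isBounded_ball.subset hVρ)
    (hf.mono hVcl).diffContOnCl (fun w hw => hfS w (hfrontier hw))
    (subset_closure (mem_connectedComponentIn hz))

lemma isClosed_ball_inter_preimage {X Y : Type*} [PseudoMetricSpace X] [TopologicalSpace Y]
    {f : X → Y} {c : X} {r : ℝ} {K : Set Y} (hf : ContinuousOn f (closedBall c r))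
    (hK : IsClosed K) (hfK : ∀ z ∈ sphere c r, f z ∉ K) : IsClosed (ball c r ∩ f ⁻¹' K) := by
  have hsphere : Disjoint (sphere c r) (f ⁻¹' K) := disjoint_left.2 hfK
  rw [← union_empty (ball c r ∩ _), ← hsphere.inter_eq, ← union_inter_distrib_right,
    ball_union_sphere]
  exact hf.preimage_isClosed_of_isClosed isClosed_closedBall hK

/-- if the iterates of a finite Blaschke product `G` tend uniformly to
the unit circle on compact subsets of `𝔻`, then for any compacts `K, L ⊆ 𝔻` and all
`n` large enough, `G⁻ⁿ(K)` is disjoint from `L` and `L` lies in the connected component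
of `closure 𝔻 \ G⁻ⁿ(K)` containing the unit circle (the component of the point `1`). -/
theorem stmt_10 (G : ℂ → ℂ) (hG : IsFiniteBlaschke G)
    (hesc : ∀ C : Set ℂ, C ⊆ Metric.ball (0:ℂ) 1 → IsCompact C →
      ∀ ε > (0:ℝ), ∃ N : ℕ, ∀ n ≥ N, ∀ z ∈ C, 1 - ε < ‖G^[n] z‖)
    (K L : Set ℂ) (hK : IsCompact K) (hKD : K ⊆ Metric.ball (0:ℂ) 1)
    (hL : IsCompact L) (hLD : L ⊆ Metric.ball (0:ℂ) 1) :
    ∃ N : ℕ, ∀ n ≥ N,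
      Disjoint {z ∈ Metric.ball (0:ℂ) 1 | G^[n] z ∈ K} L ∧
      L ⊆ connectedComponentIn
        (Metric.closedBall (0:ℂ) 1 \ {z ∈ Metric.ball (0:ℂ) 1 | G^[n] z ∈ K}) 1 := by
  obtain ⟨s, hs1, hKs⟩ := exists_lt_subset_ball hK.isClosed hKD
  have hK_lt : ∀ w ∈ K, ‖w‖ < s := fun w hw => mem_ball_zero_iff.1 (hKs hw)
  obtain ⟨N, hN⟩ := hesc L hLD hL (1 - s) (sub_pos.2 hs1)
  refine ⟨N, fun n hn => ?_⟩
  have hL_gt : ∀ z ∈ L, s < ‖G^[n] z‖ := fun z hz => by linarith [hN n hn z hz]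
  have hLK : ∀ z ∈ L, G^[n] z ∉ K := fun z hz hzK => (hL_gt z hz).not_gt (hK_lt _ hzK)
  have hS : IsClosed {z ∈ ball (0 : ℂ) 1 | G^[n] z ∈ K} := by
    refine isClosed_ball_inter_preimage (hG.continuousOn.iterate hG.mapsTo_closedBall n)
      hK.isClosed fun z hz hzK => ?_
    have := hK_lt _ hzK
    rw [mem_sphere_zero_iff_norm.1 (hG.mapsTo_sphere.iterate n hz)] at this
    linarith
  refine ⟨disjoint_right.2 fun z hz hzS => hLK z hz hzS.2, fun z hz => ?_⟩
  by_contra hzW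
  exact (hL_gt z hz).not_ge <| norm_le_of_notMem_connectedComponentIn
    (hG.differentiableOn.iterate hG.mapsTo_ball n) hS (fun w hw => hw.1)
    (fun w hw => (hK_lt _ hw.2).le) ⟨hLD hz, fun hzS => hLK z hz hzS.2⟩ hzW
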